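/- Let m, n be coprime positive integers and let γ be an (m,n)-Dyck path. Then area(γ) = (m-1)(n-1)/2 - |O(γ)|, where area(γ) is the number of complete 1×1 lattice squares lying between γ and the diagonal line y = (n/m)x, and O(γ) is the set of pairs (r_h, r_v) where r_h is a horizontal step of γ, r_v is a vertical step of γ, and r_v appears after r_h in γ. -/

import Mathlib

open scoped Classical
open Finset

/-- A lattice path is encoded as a list of steps: `false` = horizontal step `(1,0)`,
`true` = vertical step `(0,1)`.  `IsDyck m n w` says `w` is an `(m,n)`-Dyck path:
it has `m` horizontal and `n` vertical steps and every intermediate lattice point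
`(x,y)` satisfies `n*x ≤ m*y` (the path stays weakly above the diagonal `y=(n/m)x`). -/
def IsDyck (m n : ℕ) (w : List Bool) : Prop :=
  w.count false = m ∧ w.count true = n ∧
    ∀ p ∈ w.inits, n * p.count false ≤ m * p.count true

/-- `x`-coordinate of the point of the path reached after the first `i` steps. -/
def ptX (w : List Bool) (i : ℕ) : ℤ := ((w.take i).count false : ℤ)

/-- `y`-coordinate of the point of the path reached after the first `i` steps. -/
def ptY (w : List Bool) (i : ℕ) : ℤ := ((w.take i).count true : ℤ)

/-- `O(γ)`: pairs `(i,j)` of a horizontal step `i` and a vertical step `j`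
appearing later in the path. -/
def Opairs (w : List Bool) : Finset (ℕ × ℕ) :=
  (Finset.range w.length ×ˢ Finset.range w.length).filter
    (fun ij => ij.1 < ij.2 ∧ w[ij.1]? = some false ∧ w[ij.2]? = some true)

/-- The set of (bottom-left corners of) complete unit lattice squares lying between the
path and the diagonal `y = (n/m)x`: the square `[x,x+1]×[y,y+1]` lies weakly above the
diagonal and strictly below the path. -/
noncomputable def areaSet (m n : ℕ) (w : List Bool) : Finset (ℕ × ℕ) :=
  ((Finset.range m) ×ˢ (Finset.range n)).filter (fun xy =>
    n * (xy.1 + 1) ≤ m * xy.2 ∧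
    ∃ i < w.length, w[i]? = some false ∧
      (w.take (i+1)).count false = xy.1 + 1 ∧ xy.2 + 1 ≤ (w.take (i+1)).count true)

/-- `area(γ)`: the number of complete unit lattice squares between the path and the
diagonal. -/
noncomputable def area (m n : ℕ) (w : List Bool) : ℕ := (areaSet m n w).card

/-- Some line of slope `n/m` (i.e. `{(x,y) | n*x - m*y = c}`) meets both the closed
horizontal step segment `i` and the closed vertical step segment `j`. -/
def MeetsBoth (m n : ℕ) (w : List Bool) (i j : ℕ) : Prop :=
  ∃ c : ℝ,
    (∃ x : ℝ, (ptX w i : ℝ) ≤ x ∧ x ≤ (ptX w i : ℝ) + 1 ∧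
      (n : ℝ) * x - (m : ℝ) * (ptY w i : ℝ) = c) ∧
    (∃ y : ℝ, (ptY w j : ℝ) ≤ y ∧ y ≤ (ptY w j : ℝ) + 1 ∧
      (n : ℝ) * (ptX w j : ℝ) - (m : ℝ) * y = c)

/-- Condition (1A): the line of slope `n/m` through the left endpoint `(a-1,b)` of the
horizontal step `i` meets the closed vertical step segment `j`. -/
def Cond1A (m n : ℕ) (w : List Bool) (i j : ℕ) : Prop :=
  ∃ y : ℝ, (ptY w j : ℝ) ≤ y ∧ y ≤ (ptY w j : ℝ) + 1 ∧
    (n : ℝ) * ((ptX w j : ℝ) - (ptX w i : ℝ)) = (m : ℝ) * (y - (ptY w i : ℝ))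

/-- Condition (2A): the line of slope `n/m` through the top endpoint `(a',b'+1)` of the
vertical step `j` meets the closed horizontal step segment `i`. -/
def Cond2A (m n : ℕ) (w : List Bool) (i j : ℕ) : Prop :=
  ∃ x : ℝ, (ptX w i : ℝ) ≤ x ∧ x ≤ (ptX w i : ℝ) + 1 ∧
    (n : ℝ) * (x - (ptX w j : ℝ)) = (m : ℝ) * ((ptY w i : ℝ) - ((ptY w j : ℝ) + 1))

/-- `H(γ)`: pairs in `O(γ)` admitting a common transversal line parallel to the
diagonal. -/
noncomputable def Hpairs (m n : ℕ) (w : List Bool) : Finset (ℕ × ℕ) :=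
  (Opairs w).filter (fun ij => MeetsBoth m n w ij.1 ij.2)

/-- `H₁(γ)`: pairs in `O(γ)` satisfying condition (1A). -/
noncomputable def H1pairs (m n : ℕ) (w : List Bool) : Finset (ℕ × ℕ) :=
  (Opairs w).filter (fun ij => Cond1A m n w ij.1 ij.2)

/-- `H₂(γ)`: pairs in `O(γ)` satisfying condition (2A). -/
noncomputable def H2pairs (m n : ℕ) (w : List Bool) : Finset (ℕ × ℕ) :=
  (Opairs w).filter (fun ij => Cond2A m n w ij.1 ij.2)

/-- The line of slope `n/m` through the point `(px,py)` meets the closed segment of the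
horizontal step `i`. -/
def lineHitsH (m n : ℕ) (w : List Bool) (px py : ℤ) (i : ℕ) : Prop :=
  w[i]? = some false ∧
    ∃ x : ℝ, (ptX w i : ℝ) ≤ x ∧ x ≤ (ptX w i : ℝ) + 1 ∧
      (n : ℝ) * (x - (px : ℝ)) = (m : ℝ) * ((ptY w i : ℝ) - (py : ℝ))

/-- The line of slope `n/m` through the point `(px,py)` meets the closed segment of the
vertical step `j`. -/
def lineHitsV (m n : ℕ) (w : List Bool) (px py : ℤ) (j : ℕ) : Prop :=
  w[j]? = some true ∧
    ∃ y : ℝ, (ptY w j : ℝ) ≤ y ∧ y ≤ (ptY w j : ℝ) + 1 ∧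
      (n : ℝ) * ((ptX w j : ℝ) - (px : ℝ)) = (m : ℝ) * (y - (py : ℝ))

/-- Outer vertices of the path, encoded by the index `j` of a vertical step that is
immediately followed by a horizontal step; the vertex itself is the point
`(ptX w (j+1), ptY w (j+1))`. -/
def outerIdx (w : List Bool) : Finset ℕ :=
  (Finset.range w.length).filter
    (fun j => w[j]? = some true ∧ w[(j+1)]? = some false)

/-- The perpendicular distance from the diagonal of the outer vertex indexed by `j`,
measured by `m*y - n*x` (proportional to the true distance). -/
def diagDist (m n : ℕ) (w : List Bool) (j : ℕ) : ℤ :=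
  (m : ℤ) * ptY w (j+1) - (n : ℤ) * ptX w (j+1)

/-- `V(γ)`: outer vertices other than one farthest from the diagonal. -/
def Vset (m n : ℕ) (w : List Bool) : Finset ℕ :=
  (outerIdx w).filter (fun j => ∃ j' ∈ outerIdx w, diagDist m n w j < diagDist m n w j')

/-- `k(p)`: the number of horizontal steps of the path, other than the horizontal step
starting at the outer vertex `p` (indexed by `j`), met by the line of slope `n/m`
through `p`. -/
noncomputable def kH (m n : ℕ) (w : List Bool) (j : ℕ) : ℕ :=
  ((Finset.range w.length).filter
    (fun i => i ≠ j + 1 ∧ lineHitsH m n w (ptX w (j+1)) (ptY w (j+1)) i)).card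

/-- The number of vertical steps of the path, other than the vertical step ending at the
outer vertex `p` (indexed by `j`), met by the line of slope `n/m` through `p`. -/
noncomputable def kV (m n : ℕ) (w : List Bool) (j : ℕ) : ℕ :=
  ((Finset.range w.length).filter
    (fun i => i ≠ j ∧ lineHitsV m n w (ptX w (j+1)) (ptY w (j+1)) i)).card

/-- `k₁(p)`: the number of vertical steps occurring after the outer vertex `p`
(indexed by `j`) met by the line of slope `n/m` through `p`. -/
noncomputable def k1 (m n : ℕ) (w : List Bool) (j : ℕ) : ℕ :=
  ((Finset.range w.length).filter
    (fun i => j < i ∧ lineHitsV m n w (ptX w (j+1)) (ptY w (j+1)) i)).card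

/-- `k₂(p)`: the number of horizontal steps occurring before the outer vertex `p`
(indexed by `j`) met by the line of slope `n/m` through `p`. -/
noncomputable def k2 (m n : ℕ) (w : List Bool) (j : ℕ) : ℕ :=
  ((Finset.range w.length).filter
    (fun i => i ≤ j ∧ lineHitsH m n w (ptX w (j+1)) (ptY w (j+1)) i)).card

/-- The insertion map `γ ↦ γ*`: insert one horizontal step immediately after each
vertical step. -/
def star : List Bool → List Bool
  | [] => []
  | true :: w => true :: false :: star w
  | false :: w => false :: star w

/-- The index in `γ*` of the step corresponding to the step of index `i` in `γ`. -/
def starIdx (w : List Bool) (i : ℕ) : ℕ := i + (w.take i).count true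

/-- A Dyck path is rugged if every vertical step is immediately followed by a
horizontal step. -/
def Rugged (w : List Bool) : Prop :=
  ∀ i, w[i]? = some true → w[(i+1)]? = some false

/-!
Sort the unit squares of the `m × n` box by column. In the column of a horizontal step at
height `h`, the path contributes to `area(γ)` the squares between the diagonal and height `h`,
and to `O(γ)` the `n - h` vertical steps after it; together these are exactly the squares of
that column lying above the diagonal. So `area(γ) + |O(γ)| = ∑_{a<m} ⌊na/m⌋` does not depend
on `γ`. Since `m` and `n` are coprime, `na/m` is never an integer for `0 < a < m`, so
`⌊na/m⌋ + ⌊n(m-a)/m⌋ = n - 1`, and pairing `a` with `m - a` gives `(m-1)(n-1)/2`.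
-/

namespace Nat

theorem mul_div_add_mul_sub_div_add_one {m n a : ℕ} (h : m.Coprime n) (ha : 0 < a)
    (ham : a < m) : n * a / m + n * (m - a) / m + 1 = n := by
  have hsum : n * a + n * (m - a) = m * n := by
    rw [← Nat.mul_add, Nat.add_sub_cancel' ham.le, Nat.mul_comm]
  have hndvd : ¬ m ∣ n * a := fun hd => (Nat.le_of_dvd ha (h.dvd_of_dvd_mul_left hd)).not_gt ham
  rw [← Nat.add_div_eq_of_le_mod_add_mod
      (Nat.le_mod_add_mod_of_dvd_add_of_not_dvd (hsum ▸ Nat.dvd_mul_right m n) hndvd)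
      (by omega), hsum, Nat.mul_div_cancel_left n (by omega)]

theorem two_mul_sum_range_mul_div {m n : ℕ} (h : m.Coprime n) :
    2 * ∑ a ∈ range m, n * a / m = (m - 1) * (n - 1) := by
  rcases Nat.eq_zero_or_pos m with rfl | hm
  · simp
  have hreflect : ∑ a ∈ Ico 1 m, n * (m - a) / m = ∑ a ∈ Ico 1 m, n * a / m := by
    simpa using sum_Ico_reflect (fun a => n * a / m) 1 (le_succ m)
  calc 2 * ∑ a ∈ range m, n * a / m
      = ∑ a ∈ Ico 1 m, (n * a / m + n * (m - a) / m) := by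
        rw [range_eq_Ico, sum_eq_sum_Ico_succ_bot hm, sum_add_distrib, hreflect]
        simp only [Nat.mul_zero, Nat.zero_div, Nat.zero_add]
        ring
    _ = ∑ a ∈ Ico 1 m, (n - 1) := sum_congr rfl fun a ha =>
        Nat.eq_sub_of_add_eq (mul_div_add_mul_sub_div_add_one h (mem_Ico.1 ha).1 (mem_Ico.1 ha).2)
    _ = (m - 1) * (n - 1) := by simp

theorem card_filter_le_mul_and_lt_add_sub {m n c h : ℕ} (hc : c ≤ m * h) :
    #((range n).filter fun y => c ≤ m * y ∧ y < h) + (n - h) =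
      #((range n).filter fun y => c ≤ m * y) := by
  rw [← card_filter_add_card_filter_not (s := (range n).filter fun y => c ≤ m * y) (· < h),
    filter_filter, filter_filter]
  congr 1
  rw [← Nat.card_Ico h n]
  congr 1
  ext y
  simp only [mem_filter, mem_range, mem_Ico, not_lt]
  exact ⟨fun ⟨hhy, hy⟩ => ⟨hy, hc.trans (Nat.mul_le_mul_left m hhy), hhy⟩,
    fun ⟨hy, _, hhy⟩ => ⟨hhy, hy⟩⟩

theorem card_filter_range_mul_le_mul {m n k : ℕ} (hm : 0 < m) (hk : k ≤ m) :
    #((range n).filter fun y => n * k ≤ m * y) = n * (m - k) / m := by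
  have hq : n * (m - k) / m ≤ n :=
    Nat.div_le_of_le_mul (by rw [Nat.mul_comm m]; exact Nat.mul_le_mul_left n (Nat.sub_le m k))
  rw [← card_range (n * (m - k) / m)]
  refine card_nbij' (fun y => n - 1 - y) (fun y => n - 1 - y) ?_ ?_ ?_ ?_
  · intro y hy
    simp only [coe_filter, coe_range, Set.mem_Iio, Set.mem_ofPred_eq, mem_range] at hy ⊢
    refine (Nat.le_div_iff_mul_le hm).2 ?_
    rw [show (n - 1 - y).succ = n - y by omega]
    zify [hk, hy.1.le]
    nlinarith [hy.2]
  · intro y hy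
    simp only [coe_filter, coe_range, Set.mem_Iio, Set.mem_ofPred_eq, mem_range] at hy ⊢
    have hyq := (Nat.le_div_iff_mul_le hm).1 hy
    refine ⟨by omega, ?_⟩
    zify [hk, (show y ≤ n - 1 by omega), (show 1 ≤ n by omega)] at hyq ⊢
    nlinarith
  · intro y hy
    simp only [coe_filter, Set.mem_ofPred_eq, mem_range] at hy
    dsimp only
    omega
  · intro y hy
    simp only [coe_range, Set.mem_Iio] at hy
    dsimp only
    omega

end Nat

theorem Finset.card_filter_product_eq_sum {α β : Type*} (s : Finset α) (t : Finset β)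
    (p : α × β → Prop) [DecidablePred p] :
    #((s ×ˢ t).filter p) = ∑ a ∈ s, #(t.filter fun b => p (a, b)) := by
  simp only [card_filter, sum_product]

namespace List

variable {α : Type*} [DecidableEq α]

def positions (w : List α) (c : α) : Finset ℕ :=
  (Finset.range w.length).filter (fun i => w[i]? = some c)

theorem sum_positions_count_take (w : List α) (c : α) (f : ℕ → ℕ) :
    ∑ i ∈ w.positions c, f ((w.take (i + 1)).count c) =
      ∑ k ∈ Finset.range (w.count c), f (k + 1) := by
  induction w generalizing f with
  | nil => simp [positions]
  | cons a l ih =>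
    simp only [positions, Finset.sum_filter] at ih ⊢
    rw [length_cons, Finset.sum_range_succ']
    by_cases hac : a = c
    · subst hac
      simp [ih (fun k => f (k + 1)), Finset.sum_range_succ' _ (l.count a)]
    · simp [hac, ih]

theorem sum_range_count_eq_sum_positions (w : List α) (c : α) (g : ℕ → ℕ) :
    ∑ x ∈ Finset.range (w.count c), g x =
      ∑ i ∈ w.positions c, g ((w.take (i + 1)).count c - 1) := by
  simpa using (sum_positions_count_take w c (fun k => g (k - 1))).symm

theorem card_positions (w : List α) (c : α) : #(w.positions c) = w.count c := by
  simpa using sum_positions_count_take w c (fun _ => 1)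

theorem one_le_count_take_succ {w : List α} {c : α} {i : ℕ} (hi : i ∈ w.positions c) :
    1 ≤ (w.take (i + 1)).count c := by
  rw [take_add_one, (Finset.mem_filter.1 hi).2]
  simp

theorem count_take_succ_lt {w : List α} {c : α} {i j : ℕ} (hij : i < j) (hj : w[j]? = some c) :
    (w.take (i + 1)).count c < (w.take (j + 1)).count c := by
  rw [take_add_one (i := j), hj, Option.toList_some, count_append, count_singleton_self]
  exact Nat.lt_succ_of_le ((take_sublist_take_left hij).count_le c)

theorem injOn_count_take_succ (w : List α) (c : α) :
    Set.InjOn (fun i => (w.take (i + 1)).count c) (w.positions c) := by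
  intro i hi j hj hij
  simp only [positions, coe_filter, Finset.mem_range, Set.mem_ofPred_eq] at hi hj
  rcases lt_trichotomy i j with h | h | h
  · exact absurd hij (count_take_succ_lt h hj.2).ne
  · exact h
  · exact absurd hij (count_take_succ_lt h hi.2).ne'

theorem card_positions_filter_lt (w : List α) (c : α) (k : ℕ) :
    #((w.positions c).filter (· < k)) = (w.take k).count c := by
  rw [← card_positions]
  congr 1
  ext j
  simp only [positions, Finset.mem_filter, Finset.mem_range, length_take]
  constructor
  · rintro ⟨⟨hj, hjc⟩, hjk⟩
    exact ⟨by omega, by rwa [getElem?_take_of_lt hjk]⟩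
  · rintro ⟨hj, hjc⟩
    rw [getElem?_take_of_lt (by omega)] at hjc
    exact ⟨⟨by omega, hjc⟩, by omega⟩

theorem card_positions_filter_gt (w : List α) (c : α) (i : ℕ) :
    #((w.positions c).filter (i < ·)) = w.count c - (w.take (i + 1)).count c := by
  have hsplit := card_filter_add_card_filter_not (s := w.positions c) (· < i + 1)
  simp only [Nat.not_lt, Nat.succ_le_iff] at hsplit
  rw [← card_positions, ← card_positions_filter_lt]
  omega

end List

theorem IsDyck.mul_count_take_le {m n : ℕ} {w : List Bool} (hw : IsDyck m n w) (k : ℕ) :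
    n * (w.take k).count false ≤ m * (w.take k).count true :=
  hw.2.2 _ ((List.mem_inits _ _).2 (List.take_prefix _ _))

theorem area_eq_sum_positions {m n : ℕ} {w : List Bool} (hw : w.count false = m) :
    area m n w = ∑ i ∈ w.positions false, #((range n).filter fun y =>
      n * (w.take (i + 1)).count false ≤ m * y ∧ y < (w.take (i + 1)).count true) := by
  subst hw
  rw [area, areaSet, card_filter_product_eq_sum, List.sum_range_count_eq_sum_positions]
  refine sum_congr rfl fun i hi => ?_
  congr 1
  refine filter_congr fun y _ => ?_
  rw [Nat.sub_add_cancel (List.one_le_count_take_succ hi)]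
  constructor
  · rintro ⟨hle, j, hj, hjw, hji, hy⟩
    obtain rfl : j = i :=
      List.injOn_count_take_succ w false (mem_filter.2 ⟨mem_range.2 hj, hjw⟩) hi hji
    exact ⟨hle, hy⟩
  · rintro ⟨hle, hy⟩
    exact ⟨hle, i, mem_range.1 (mem_filter.1 hi).1, (mem_filter.1 hi).2, rfl, hy⟩

theorem card_Opairs_eq_sum (w : List Bool) :
    #(Opairs w) = ∑ i ∈ w.positions false, (w.count true - (w.take (i + 1)).count true) := by
  rw [Opairs, card_filter_product_eq_sum, List.positions, sum_filter]
  refine sum_congr rfl fun i _ => ?_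
  split_ifs with hi
  · rw [← List.card_positions_filter_gt, List.positions, filter_filter]
    congr 1
    exact filter_congr fun j _ => by simp [hi, and_comm]
  · simp [hi]

theorem area_add_card_Opairs {m n : ℕ} (hm : 0 < m) {w : List Bool} (hw : IsDyck m n w) :
    area m n w + #(Opairs w) = ∑ a ∈ range m, n * a / m := by
  rw [area_eq_sum_positions hw.1, card_Opairs_eq_sum, hw.2.1, ← sum_add_distrib]
  calc _ = ∑ i ∈ w.positions false,
        #((range n).filter fun y => n * (w.take (i + 1)).count false ≤ m * y) :=
        sum_congr rfl fun i _ => Nat.card_filter_le_mul_and_lt_add_sub (hw.mul_count_take_le _)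
    _ = ∑ x ∈ range m, #((range n).filter fun y => n * (x + 1) ≤ m * y) := by
        rw [List.sum_positions_count_take w false
          (fun k => #((range n).filter fun y => n * k ≤ m * y)), hw.1]
    _ = ∑ x ∈ range m, n * (m - 1 - x) / m := sum_congr rfl fun x hx => by
        rw [Nat.card_filter_range_mul_le_mul hm (mem_range.1 hx), Nat.sub_sub, Nat.add_comm 1]
    _ = ∑ a ∈ range m, n * a / m := sum_range_reflect (fun a => n * a / m) m

/-- `area(γ) = (m-1)(n-1)/2 - |O(γ)|`. -/
theorem statement1 (m n : ℕ) (hm : 0 < m) (hn : 0 < n) (h : Nat.Coprime m n)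
    (w : List Bool) (hw : IsDyck m n w) :
    (area m n w : ℚ) = ((m : ℚ) - 1) * ((n : ℚ) - 1) / 2 - ((Opairs w).card : ℚ) := by
  have hfloor := Nat.two_mul_sum_range_mul_div h
  rw [← area_add_card_Opairs hm hw] at hfloor
  have hcast : 2 * ((area m n w : ℚ) + #(Opairs w)) = ((m - 1 : ℕ) : ℚ) * ((n - 1 : ℕ) : ℚ) := by
    exact_mod_cast hfloor
  rw [Nat.cast_sub hm, Nat.cast_sub hn, Nat.cast_one] at hcast
  linarith
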